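/- A linear code C over a finite chain ring is MDS if and only if it is both MDR and free. -/

import Mathlib

open Matrix Finset

/-- The Hamming weight of a vector: number of nonzero entries. -/
noncomputable def wt {R : Type*} [Zero R] {n : ℕ} (v : Fin n → R) : ℕ :=
  Nat.card {i : Fin n // v i ≠ 0}

/-- Minimum Hamming distance (= minimum weight of a nonzero codeword). -/
noncomputable def minDist {R : Type*} [Zero R] {n : ℕ} (C : Set (Fin n → R)) : ℕ :=
  sInf {w | ∃ c ∈ C, c ≠ 0 ∧ wt c = w}

/-- Dual code w.r.t. the standard inner product. -/
def dualCode {R : Type*} [CommRing R] {n : ℕ} (C : Submodule R (Fin n → R)) :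
    Submodule R (Fin n → R) where
  carrier := {v | ∀ c ∈ C, ∑ i, v i * c i = 0}
  add_mem' := by
    intro a b ha hb c hc
    simp only [Set.mem_setOf_eq] at *
    simp [Pi.add_apply, add_mul, Finset.sum_add_distrib, ha c hc, hb c hc]
  zero_mem' := by
    intro c hc
    simp
  smul_mem' := by
    intro r v hv c hc
    simp only [Set.mem_setOf_eq] at *
    simp [Pi.smul_apply, smul_eq_mul, mul_assoc, ← Finset.mul_sum, hv c hc]

/-- The rank of a code: minimal number of generators. -/
noncomputable def rankCode {R M : Type*} [Ring R] [AddCommGroup M] [Module R M] (C : Submodule R M) : ℕ :=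
  sInf {k | ∃ S : Finset M, S.card = k ∧ Submodule.span R (S : Set M) = C}

/-- `H` is a parity-check matrix for `C` : its kernel is exactly `C`. -/
def IsParityCheck {R : Type*} [CommRing R] {m n : ℕ} (H : Matrix (Fin m) (Fin n) R)
    (C : Submodule R (Fin n → R)) : Prop :=
  ∀ v, v ∈ C ↔ H.mulVec v = 0

/-- A matrix (with rows indexed by `m`, columns by `ι`) has type `(t 0, …, t (s-1))` if exactly
`t i` of its rows are divisible by `γ^i` but not by `γ^(i+1)`. -/
def MatrixType {R : Type*} [CommRing R] {m ι : Type*} (γ : R) (s : ℕ)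
    (M : m → ι → R) (t : ℕ → ℕ) : Prop :=
  ∀ i < s, Nat.card {r : m // (∃ u, M r = γ ^ i • u) ∧ ¬ ∃ u, M r = γ ^ (i + 1) • u} = t i

/-- A code has type `(k 0, …, k (s-1))` if it admits a generator matrix (rows span the code,
no row is a combination of the others) of that row type. -/
def CodeHasType {R : Type*} [CommRing R] {n : ℕ} (γ : R) (s : ℕ)
    (C : Submodule R (Fin n → R)) (k : ℕ → ℕ) : Prop :=
  ∃ G : Matrix (Fin (∑ i ∈ Finset.range s, k i)) (Fin n) R,
    Submodule.span R (Set.range G) = C ∧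
    (∀ j, G j ∉ Submodule.span R (Set.range G \ {G j})) ∧
    MatrixType γ s G k

/-- The weight distribution of a code. -/
noncomputable def weightDist {R : Type*} [CommRing R] {n : ℕ} (C : Submodule R (Fin n → R)) (l : ℕ) : ℕ :=
  Nat.card {c : Fin n → R // c ∈ C ∧ wt c = l}

/-- A ring is a chain ring if its ideals are linearly ordered by inclusion. -/
def IsChainRing (R : Type*) [Ring R] : Prop := ∀ I J : Ideal R, I ≤ J ∨ J ≤ I

/-- `γ` generates the (unique) maximal ideal of `R`. -/
def MaxIdealGen {R : Type*} [CommRing R] (γ : R) : Prop :=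
  Ideal.span {γ} ≠ ⊤ ∧ ∀ I : Ideal R, I ≠ ⊤ → I ≤ Ideal.span {γ}

/-!
Restricting a code of minimum distance `d` to any `n + 1 - d` coordinates is injective, since a
nonzero codeword vanishing there would have weight at most `d - 1` (the Singleton bound). So `C`
is MDS exactly when such a restriction is onto, i.e. identifies `C` with `R^(n+1-d)`. Conversely,
a free code of rank `K` has `|R|^K` elements and needs exactly `K` generators, because over a
commutative ring `K` is its `finrank`; so for it MDS is the same as `d = n - K + 1`.
-/

open Module

section Weight

variable {R : Type*} [Zero R] {n : ℕ}

open scoped Classical in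
theorem wt_eq_card_filter (v : Fin n → R) : wt v = #{i | v i ≠ 0} := by
  rw [wt, Nat.card_eq_fintype_card, Fintype.card_subtype]

theorem wt_le (v : Fin n → R) : wt v ≤ n := by
  classical
  simpa [wt_eq_card_filter] using Finset.card_filter_le Finset.univ (fun i => v i ≠ 0)

theorem wt_pos {v : Fin n → R} (hv : v ≠ 0) : 0 < wt v := by
  classical
  obtain ⟨i, hi⟩ := Function.ne_iff.mp hv
  rw [wt_eq_card_filter, Finset.card_pos]
  exact ⟨i, by simpa using hi⟩

theorem wt_le_sub_of_comp_eq_zero {m : ℕ} {f : Fin m → Fin n} (hf : f.Injective)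
    {v : Fin n → R} (hv : v ∘ f = 0) : wt v ≤ n - m := by
  classical
  have hsupp : ({i | v i ≠ 0} : Finset (Fin n)) ⊆ (Finset.univ.image f)ᶜ := by
    intro i hi
    simp only [Finset.mem_filter, Finset.mem_univ, true_and] at hi
    simp only [Finset.mem_compl, Finset.mem_image, Finset.mem_univ, true_and, not_exists]
    rintro j rfl
    exact hi (congrFun hv j)
  calc wt v ≤ #(Finset.univ.image f)ᶜ := wt_eq_card_filter v ▸ Finset.card_le_card hsupp
    _ = n - m := by
      rw [Finset.card_compl, Finset.card_image_of_injective _ hf]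
      simp

theorem minDist_le_wt {C : Set (Fin n → R)} {c : Fin n → R} (hc : c ∈ C) (hc0 : c ≠ 0) :
    minDist C ≤ wt c :=
  Nat.sInf_le ⟨c, hc, hc0, rfl⟩

theorem minDist_le (C : Set (Fin n → R)) : minDist C ≤ n := by
  rcases Set.eq_empty_or_nonempty {w | ∃ c ∈ C, c ≠ 0 ∧ wt c = w} with h | h
  · simp [minDist, h]
  · obtain ⟨c, -, -, hc⟩ := Nat.sInf_mem h
    calc minDist C = wt c := hc.symm
      _ ≤ n := wt_le c

theorem minDist_pos {C : Set (Fin n → R)} {c : Fin n → R} (hc : c ∈ C) (hc0 : c ≠ 0) :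
    0 < minDist C := by
  obtain ⟨c', -, hc'0, hc'⟩ :=
    Nat.sInf_mem (s := {w | ∃ c ∈ C, c ≠ 0 ∧ wt c = w}) ⟨wt c, c, hc, hc0, rfl⟩
  calc 0 < wt c' := wt_pos hc'0
    _ = minDist C := hc'

end Weight

section Singleton

variable {R : Type*} [Ring R] {n : ℕ}

theorem injective_funLeft_comp_subtype_of_lt {C : Submodule R (Fin n → R)} {m : ℕ}
    {f : Fin m → Fin n} (hf : f.Injective) (hm : n < m + minDist (C : Set (Fin n → R))) :
    Function.Injective ((LinearMap.funLeft R R f).comp C.subtype) := by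
  rw [injective_iff_map_eq_zero]
  intro c hc
  by_contra hc0
  have hne : (c : Fin n → R) ≠ 0 := fun h => hc0 (Subtype.ext h)
  have hupper := wt_le_sub_of_comp_eq_zero (v := (c : Fin n → R)) hf hc
  have hlower := minDist_le_wt c.2 hne
  have hmn : m ≤ n := by simpa using Fintype.card_le_of_injective f hf
  have := hlower.trans hupper
  omega

theorem nonempty_linearEquiv_of_card_eq_pow [Finite R] {C : Submodule R (Fin n → R)}
    (hd : 0 < minDist (C : Set (Fin n → R)))
    (hcard : Nat.card C = Nat.card R ^ (n + 1 - minDist (C : Set (Fin n → R)))) :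
    Nonempty (C ≃ₗ[R] (Fin (n + 1 - minDist (C : Set (Fin n → R))) → R)) := by
  have hdn := minDist_le (C : Set (Fin n → R))
  have hle : n + 1 - minDist (C : Set (Fin n → R)) ≤ n := by omega
  set f := (LinearMap.funLeft R R (Fin.castLE hle)).comp C.subtype
  have hinj : Function.Injective f :=
    injective_funLeft_comp_subtype_of_lt (Fin.castLE_injective hle) (by omega)
  have hbij : Function.Bijective f :=
    (Nat.bijective_iff_injective_and_card f).mpr ⟨hinj, by simp [hcard, Nat.card_fun]⟩
  exact ⟨LinearEquiv.ofBijective f hbij⟩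

end Singleton

theorem rankCode_eq_finrank {R M : Type*} [CommRing R] [Nontrivial R] [AddCommGroup M]
    [Module R M] (C : Submodule R M) [Free R C] [Module.Finite R C] :
    rankCode C = finrank R C := by
  classical
  let b := Free.chooseBasis R C
  let S : Finset M := Finset.univ.image fun i => (b i : M)
  have hS : Submodule.span R (S : Set M) = C := by
    rw [Finset.coe_image, Finset.coe_univ, Set.image_univ, Set.range_comp',
      ← Submodule.coe_subtype, Submodule.span_image, b.span_eq, Submodule.map_subtype_top]
  refine le_antisymm ?_ (le_csInf ⟨_, S, rfl, hS⟩ ?_)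
  · calc rankCode C ≤ #S := Nat.sInf_le ⟨S, rfl, hS⟩
      _ ≤ Fintype.card (Free.ChooseBasisIndex R C) := Finset.card_image_le
      _ = finrank R C := (finrank_eq_card_chooseBasisIndex R C).symm
  · rintro k ⟨T, rfl, hT⟩
    exact hT ▸ finrank_span_finset_le_card T

theorem rankCode_eq_of_linearEquiv {R M : Type*} [CommRing R] [Nontrivial R] [AddCommGroup M]
    [Module R M] {C : Submodule R M} {K : ℕ} (e : C ≃ₗ[R] (Fin K → R)) : rankCode C = K := by
  have := Free.of_equiv e.symm
  have := Module.Finite.equiv e.symm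
  rw [rankCode_eq_finrank, e.finrank_eq, finrank_fin_fun]

theorem stmt_19_general {R : Type*} [CommRing R] [Fintype R]
    (p s : ℕ) (hcard : Nat.card R = p ^ s)
    {n : ℕ} (C : Submodule R (Fin n → R)) (hC : C ≠ ⊥) :
    Nat.card C = (p ^ s) ^ (n + 1 - minDist (C : Set (Fin n → R))) ↔
    (minDist (C : Set (Fin n → R)) = n - rankCode C + 1 ∧
      Nonempty (C ≃ₗ[R] (Fin (rankCode C) → R))) := by
  have : Nontrivial C := Submodule.nontrivial_iff_ne_bot.mpr hC
  have := Module.nontrivial R C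
  obtain ⟨c, hc, hc0⟩ := (Submodule.ne_bot_iff C).mp hC
  have hd := minDist_pos (C := (C : Set (Fin n → R))) hc hc0
  have hdn := minDist_le (C : Set (Fin n → R))
  rw [← hcard]
  constructor
  · intro hMDS
    obtain ⟨e⟩ := nonempty_linearEquiv_of_card_eq_pow hd hMDS
    rw [rankCode_eq_of_linearEquiv e]
    exact ⟨by omega, ⟨e⟩⟩
  · rintro ⟨hMDR, ⟨e⟩⟩
    have hKn : rankCode C ≤ n := by
      simpa [e.finrank_eq] using Submodule.finrank_le C
    rw [Nat.card_congr e.toEquiv, Nat.card_fun, Nat.card_fin]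
    congr 1
    omega

theorem stmt_19 {R : Type*} [CommRing R] [Fintype R] (hR : IsChainRing R)
    (p s : ℕ) (hcard : Nat.card R = p ^ s)
    {n : ℕ} (C : Submodule R (Fin n → R)) (hC : C ≠ ⊥) :
    Nat.card C = (p ^ s) ^ (n + 1 - minDist (C : Set (Fin n → R))) ↔
    (minDist (C : Set (Fin n → R)) = n - rankCode C + 1 ∧
      Nonempty (C ≃ₗ[R] (Fin (rankCode C) → R))) :=
  stmt_19_general p s hcard C hC
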